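/- For every positive integer k, the number of points of S whose degree in the underlying graph of S is at least n − 2k + 1 is at most 2k. -/

import Mathlib

/-- Planar cross product (signed area determinant) of two vectors in `ℝ × ℝ`. -/
def det2 (u v : ℝ × ℝ) : ℝ := u.1 * v.2 - u.2 * v.1

/-- Dot product of two vectors in `ℝ × ℝ`. -/
def dot2 (u v : ℝ × ℝ) : ℝ := u.1 * v.1 + u.2 * v.2

/-- A finite set of points of the plane is in general position if no three
distinct points of it are collinear. -/
def GenPos (S : Finset (ℝ × ℝ)) : Prop :=
  ∀ P ∈ S, ∀ Q ∈ S, ∀ R ∈ S, P ≠ Q → P ≠ R → Q ≠ R →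
    ¬ Collinear ℝ ({P, Q, R} : Set (ℝ × ℝ))

/-- The line through the two distinct points `P, Q ∈ S` is a halving line of `S`:
each of the two open half-planes it determines contains exactly
`(S.card - 2) / 2` points of `S`. -/
def IsHalving (S : Finset (ℝ × ℝ)) (P Q : ℝ × ℝ) : Prop :=
  P ∈ S ∧ Q ∈ S ∧ P ≠ Q ∧
  {X ∈ (S : Set (ℝ × ℝ)) | 0 < det2 (Q - P) (X - P)}.ncard = (S.card - 2) / 2 ∧
  {X ∈ (S : Set (ℝ × ℝ)) | det2 (Q - P) (X - P) < 0}.ncard = (S.card - 2) / 2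

/-- Degree of a point in the underlying graph of `S`: the number of points `Q`
such that the line `PQ` is a halving line of `S`. -/
noncomputable def hdeg (S : Finset (ℝ × ℝ)) (P : ℝ × ℝ) : ℕ :=
  {Q : ℝ × ℝ | IsHalving S P Q}.ncard

/-- The number of halving lines of `S`, counted as unordered pairs of points. -/
noncomputable def numHalvingLines (S : Finset (ℝ × ℝ)) : ℕ :=
  {e : Finset (ℝ × ℝ) | ∃ P Q : ℝ × ℝ, e = {P, Q} ∧ IsHalving S P Q}.ncard

/-- The underlying graph of `S`: vertices are the points of `S`, and two points
are adjacent exactly when the line through them is a halving line of `S`. -/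
def underlyingGraph (S : Finset (ℝ × ℝ)) : SimpleGraph {x : ℝ × ℝ // x ∈ S} where
  Adj P Q := IsHalving S P.1 Q.1 ∧ IsHalving S Q.1 P.1
  symm := ⟨fun _ _ h => ⟨h.2, h.1⟩⟩
  loopless := ⟨fun _ h => h.1.2.2.1 rfl⟩

/-! Fix a direction `u` in which the points of `S` have pairwise distinct projections, and let the
rank of `P` be the number of points with smaller projection. Turning a line around `P` and
counting the points on one side of it, the halving lines through `P` are the moments where the
count crosses the level `(n - 2) / 2`. Downward and upward crossings alternate, and the upward ones
happen at points of smaller projection, so `deg P ≤ 2 · rank P + 1`. Together with the same bound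
for `-u`, a point of degree at least `n - 2k + 1` has its rank in an interval of at most `2k`
integers, and distinct points have distinct ranks. -/

open Finset

section Sweep

variable {α : Type*} {σ ε : α → ℝ}

variable (σ ε) in
noncomputable def sweepCount (T : Finset α) (t : ℝ) : ℕ := #{X ∈ T | 0 < ε X * (σ X - t)}

lemma card_filter_insert_of_notMem [DecidableEq α] {p : α → Prop} [DecidablePred p]
    {s : Finset α} {a : α} (ha : a ∉ s) :
    #{x ∈ insert a s | p x} = #{x ∈ s | p x} + if p a then 1 else 0 := by
  rw [filter_insert]
  split_ifs
  · exact card_insert_of_notMem (fun h => ha (mem_filter.1 h).1)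
  · rfl

lemma sweepCount_insert_of_lt [DecidableEq α] {T : Finset α} {a : α} {t : ℝ} (ha : a ∉ T)
    (ht : t < σ a) :
    sweepCount σ ε (insert a T) t = sweepCount σ ε T t + if 0 < ε a then 1 else 0 := by
  simp only [sweepCount, card_filter_insert_of_notMem ha, mul_pos_iff_of_pos_right (sub_pos.2 ht)]

lemma sweepCount_insert_self [DecidableEq α] (T : Finset α) (a : α) :
    sweepCount σ ε (insert a T) (σ a) = sweepCount σ ε T (σ a) := by
  simp [sweepCount, filter_insert]

lemma sweepCount_of_forall_lt {T : Finset α} {t : ℝ} (h : ∀ X ∈ T, σ X < t) :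
    sweepCount σ ε T t = #{X ∈ T | ε X < 0} := by
  refine congrArg card (filter_congr fun X hX => ?_)
  have := sub_neg.2 (h X hX)
  constructor <;> intro <;> nlinarith

/-- As `t` increases, `sweepCount σ ε T t` drops by one at each `σ Q` with `ε Q > 0` and rises by
one at each `σ Q` with `ε Q < 0`. The cardinalities count the downward and the upward crossings
between the levels `m + 1` and `m`, the indicators compare the count at `t = +∞` and `t = -∞`
with `m`: the identity telescopes along the sweep. -/
theorem sweepCount_crossing_balance [DecidableEq α] (T : Finset α) (hσ : Set.InjOn σ T)
    (m : ℤ) :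
    (#{Q ∈ T | 0 < ε Q ∧ (sweepCount σ ε T (σ Q) : ℤ) = m} : ℤ)
        + (if m < #{X ∈ T | ε X < 0} then 1 else 0)
      = #{Q ∈ T | ε Q < 0 ∧ (sweepCount σ ε T (σ Q) : ℤ) = m}
        + (if m < #{X ∈ T | 0 < ε X} then 1 else 0) := by
  induction T using Finset.induction_on_max_value σ generalizing m with
  | empty => simp
  | insert a s ha hmax ih =>
    have hlt : ∀ x ∈ s, σ x < σ a := fun x hx =>
      (hmax x hx).lt_of_ne fun h => ha (hσ (mem_insert_of_mem hx) (mem_insert_self a s) h ▸ hx)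
    set c : ℤ := if 0 < ε a then 1 else 0
    have hF : ∀ Q ∈ s, (sweepCount σ ε (insert a s) (σ Q) : ℤ) = sweepCount σ ε s (σ Q) + c := by
      intro Q hQ
      rw [sweepCount_insert_of_lt ha (hlt Q hQ)]
      split_ifs <;> simp [c, *]
    have hFa : sweepCount σ ε (insert a s) (σ a) = #{X ∈ s | ε X < 0} := by
      rw [sweepCount_insert_self, sweepCount_of_forall_lt hlt]
    have hcross : ∀ p : α → Prop, ∀ [DecidablePred p],
        #{Q ∈ insert a s | p Q ∧ (sweepCount σ ε (insert a s) (σ Q) : ℤ) = m}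
          = #{Q ∈ s | p Q ∧ (sweepCount σ ε s (σ Q) : ℤ) = m - c}
            + if p a ∧ (#{X ∈ s | ε X < 0} : ℤ) = m then 1 else 0 := by
      intro p _
      rw [card_filter_insert_of_notMem ha, hFa]
      congr 2
      refine filter_congr fun Q hQ => ?_
      rw [hF Q hQ, ← eq_sub_iff_add_eq]
    specialize ih (hσ.mono (subset_insert a s)) (m - c)
    rw [hcross, hcross, card_filter_insert_of_notMem ha, card_filter_insert_of_notMem ha]
    by_cases hpos : 0 < ε a <;> by_cases hneg : ε a < 0 <;>
      simp only [c, hpos, hneg, if_false, if_true, true_and, false_and, sub_zero] at ih ⊢ <;>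
      split_ifs at ih ⊢ <;> push_cast at * <;> omega

theorem card_filter_sweepCount_eq_le [DecidableEq α] {T : Finset α} (hσ : Set.InjOn σ T)
    (hε : ∀ X ∈ T, ε X ≠ 0) (m : ℕ) :
    #{Q ∈ T | sweepCount σ ε T (σ Q) = m} ≤ 2 * #{X ∈ T | ε X < 0} + 1 := by
  have hsplit := card_filter_add_card_filter_not (s := {Q ∈ T | sweepCount σ ε T (σ Q) = m})
    (fun Q => 0 < ε Q)
  simp only [filter_filter] at hsplit
  have hdown : {Q ∈ T | sweepCount σ ε T (σ Q) = m ∧ 0 < ε Q}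
      = {Q ∈ T | 0 < ε Q ∧ (sweepCount σ ε T (σ Q) : ℤ) = m} :=
    filter_congr fun Q _ => by rw [and_comm, Nat.cast_inj]
  have hup : {Q ∈ T | sweepCount σ ε T (σ Q) = m ∧ ¬0 < ε Q}
      = {Q ∈ T | ε Q < 0 ∧ (sweepCount σ ε T (σ Q) : ℤ) = m} :=
    filter_congr fun Q hQ => by rw [and_comm, Nat.cast_inj, not_lt, (hε Q hQ).le_iff_lt]
  have hup_le :
      #{Q ∈ T | ε Q < 0 ∧ (sweepCount σ ε T (σ Q) : ℤ) = m} ≤ #{X ∈ T | ε X < 0} := by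
    rw [← filter_filter]
    exact card_le_card (filter_subset _ _)
  have hcross := sweepCount_crossing_balance (ε := ε) T hσ m
  rw [hdown, hup] at hsplit
  split_ifs at hcross <;> omega

end Sweep

lemma dot2_self_pos {u : ℝ × ℝ} (hu : u ≠ 0) : 0 < dot2 u u := by
  obtain ⟨x, y⟩ := u
  have : x ≠ 0 ∨ y ≠ 0 := by
    by_contra! h
    simp_all
  unfold dot2
  rcases this with h | h
  · nlinarith [mul_self_pos.2 h, mul_self_nonneg y]
  · nlinarith [mul_self_pos.2 h, mul_self_nonneg x]

lemma dot2_sub (u X Y : ℝ × ℝ) : dot2 u (X - Y) = dot2 u X - dot2 u Y := by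
  simp only [dot2, Prod.fst_sub, Prod.snd_sub]; ring

lemma dot2_neg_left (u X : ℝ × ℝ) : dot2 (-u) X = -dot2 u X := by
  simp only [dot2, Prod.fst_neg, Prod.snd_neg]; ring

lemma eq_smul_of_det2_eq_zero {a b : ℝ × ℝ} (ha : a ≠ 0) (h : det2 a b = 0) :
    b = (dot2 a b / dot2 a a) • a := by
  have ha' : a.1 ^ 2 + a.2 ^ 2 ≠ 0 := by simpa only [dot2, sq] using (dot2_self_pos ha).ne'
  unfold det2 at h
  unfold dot2
  ext <;> simp only [Prod.smul_fst, Prod.smul_snd, smul_eq_mul] <;> field_simp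
  · linear_combination -a.2 * h
  · linear_combination a.1 * h

lemma collinear_of_det2_sub_eq_zero {P Q X : ℝ × ℝ} (hPQ : P ≠ Q)
    (h : det2 (Q - P) (X - P) = 0) : Collinear ℝ ({P, Q, X} : Set (ℝ × ℝ)) := by
  rw [Set.pair_comm, Set.insert_comm]
  apply collinear_insert_of_mem_affineSpan_pair
  have hX := eq_smul_of_det2_eq_zero (sub_ne_zero.2 hPQ.symm) h
  rw [sub_eq_iff_eq_add] at hX
  rw [hX]
  exact smul_vsub_vadd_mem_affineSpan_pair _ _ _

lemma GenPos.det2_sub_ne_zero {S : Finset (ℝ × ℝ)} (hgp : GenPos S) {P Q X : ℝ × ℝ}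
    (hP : P ∈ S) (hQ : Q ∈ S) (hX : X ∈ S) (hPQ : P ≠ Q) (hPX : P ≠ X) (hQX : Q ≠ X) :
    det2 (Q - P) (X - P) ≠ 0 :=
  fun h => hgp P hP Q hQ X hX hPQ hPX hQX (collinear_of_det2_sub_eq_zero hPQ h)

lemma exists_injOn_dot2 (S : Finset (ℝ × ℝ)) : ∃ u : ℝ × ℝ, u ≠ 0 ∧ Set.InjOn (dot2 u) S := by
  obtain ⟨t, ht⟩ := Infinite.exists_notMem_finset
    ((S ×ˢ S).image fun PQ : (ℝ × ℝ) × (ℝ × ℝ) => (PQ.1.1 - PQ.2.1) / (PQ.2.2 - PQ.1.2))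
  refine ⟨(1, t), by simp, fun P hP Q hQ h => ?_⟩
  simp only [dot2, one_mul] at h
  by_cases h2 : Q.2 - P.2 = 0
  · exact Prod.ext (by linear_combination h + t * h2) (by linear_combination -h2)
  · refine absurd (mem_image.2 ⟨(P, Q), mem_product.2 ⟨hP, hQ⟩, ?_⟩) ht
    rw [div_eq_iff h2]
    linear_combination h

lemma dot2_self_mul_det2 (u a b : ℝ × ℝ) (ha : dot2 u a ≠ 0) (hb : dot2 u b ≠ 0) :
    dot2 u u * det2 a b
      = dot2 u a * dot2 u b * (det2 u b / dot2 u b - det2 u a / dot2 u a) := by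
  field_simp
  simp only [dot2, det2]
  ring

lemma ncard_sep_mem_coe {α : Type*} (S : Finset α) (p : α → Prop) [DecidablePred p] :
    {X ∈ (S : Set α) | p X}.ncard = #{X ∈ S | p X} := by
  rw [← Set.ncard_coe_finset, coe_filter]
  rfl

section HalvingLines

/-- The slope, in the frame with first axis `u`, of the line through `P` and `X`. -/
noncomputable def relSlope (u P X : ℝ × ℝ) : ℝ := det2 u (X - P) / dot2 u (X - P)

variable {S : Finset (ℝ × ℝ)} {u P Q : ℝ × ℝ}

lemma relSlope_injOn (hgp : GenPos S) (hu : u ≠ 0) (hP : P ∈ S)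
    (hε : ∀ X ∈ S.erase P, dot2 u (X - P) ≠ 0) : Set.InjOn (relSlope u P) (S.erase P) := by
  intro Q hQ X hX h
  by_contra hQX
  rw [mem_coe] at hQ hX
  refine hgp.det2_sub_ne_zero hP (mem_of_mem_erase hQ) (mem_of_mem_erase hX)
    (ne_of_mem_erase hQ).symm (ne_of_mem_erase hX).symm hQX ?_
  have key := dot2_self_mul_det2 u (Q - P) (X - P) (hε Q hQ) (hε X hX)
  rw [← relSlope, ← relSlope, h, sub_self, mul_zero] at key
  exact (mul_eq_zero.1 key).resolve_left (dot2_self_pos hu).ne'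

lemma pos_dot2_mul_det2_iff {X : ℝ × ℝ} (hu : u ≠ 0) (hQ : dot2 u (Q - P) ≠ 0)
    (hX : dot2 u (X - P) ≠ 0) :
    0 < dot2 u (Q - P) * det2 (Q - P) (X - P)
      ↔ 0 < dot2 u (X - P) * (relSlope u P X - relSlope u P Q) := by
  have key : dot2 u u * (dot2 u (Q - P) * det2 (Q - P) (X - P))
      = dot2 u (Q - P) ^ 2 * (dot2 u (X - P) * (relSlope u P X - relSlope u P Q)) := by
    rw [mul_left_comm, dot2_self_mul_det2 u _ _ hQ hX, relSlope, relSlope]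
    ring
  rw [← mul_pos_iff_of_pos_left (dot2_self_pos hu), key,
    mul_pos_iff_of_pos_left (pow_two_pos_of_ne_zero hQ)]

lemma sweepCount_relSlope (hu : u ≠ 0) (hε : ∀ X ∈ S.erase P, dot2 u (X - P) ≠ 0)
    (hQ : Q ∈ S.erase P) :
    sweepCount (relSlope u P) (fun X => dot2 u (X - P)) (S.erase P) (relSlope u P Q)
      = #{X ∈ S | 0 < dot2 u (Q - P) * det2 (Q - P) (X - P)} := by
  unfold sweepCount
  rw [← filter_congr fun X hX => pos_dot2_mul_det2_iff hu (hε Q hQ) (hε X hX), filter_erase,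
    erase_eq_of_notMem]
  rw [mem_filter]
  simp [det2]

lemma IsHalving.sweepCount_eq (h : IsHalving S P Q) (hu : u ≠ 0)
    (hε : ∀ X ∈ S.erase P, dot2 u (X - P) ≠ 0) :
    sweepCount (relSlope u P) (fun X => dot2 u (X - P)) (S.erase P) (relSlope u P Q)
      = (#S - 2) / 2 := by
  obtain ⟨hP, hQ, hPQ, hpos, hneg⟩ := h
  have hQ' : Q ∈ S.erase P := mem_erase.2 ⟨hPQ.symm, hQ⟩
  rw [ncard_sep_mem_coe] at hpos hneg
  rw [sweepCount_relSlope hu hε hQ']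
  rcases (hε Q hQ').lt_or_gt with hQneg | hQpos
  · rw [← hneg]
    exact congrArg card (filter_congr fun X _ => by
      constructor <;> intro h <;> nlinarith)
  · rw [← hpos]
    exact congrArg card (filter_congr fun X _ => mul_pos_iff_of_pos_left hQpos)

theorem hdeg_le_two_mul_card_filter_lt_add_one (hgp : GenPos S) (hu : u ≠ 0)
    (hinj : Set.InjOn (dot2 u) S) (hP : P ∈ S) :
    hdeg S P ≤ 2 * #{X ∈ S | dot2 u X < dot2 u P} + 1 := by
  have hε : ∀ X ∈ S.erase P, dot2 u (X - P) ≠ 0 := fun X hX => by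
    rw [dot2_sub, sub_ne_zero]
    exact hinj.ne (mem_of_mem_erase hX) hP (ne_of_mem_erase hX)
  calc hdeg S P
      ≤ #{Q ∈ S.erase P | sweepCount (relSlope u P) (fun X => dot2 u (X - P)) (S.erase P)
          (relSlope u P Q) = (#S - 2) / 2} := by
        rw [hdeg, ← Set.ncard_coe_finset]
        refine Set.ncard_le_ncard (fun Q hQ => ?_)
        rw [coe_filter]
        exact ⟨mem_erase.2 ⟨hQ.2.2.1.symm, hQ.2.1⟩, hQ.sweepCount_eq hu hε⟩
    _ ≤ 2 * #{X ∈ S.erase P | dot2 u (X - P) < 0} + 1 :=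
        card_filter_sweepCount_eq_le (relSlope_injOn hgp hu hP hε) hε _
    _ ≤ 2 * #{X ∈ S | dot2 u X < dot2 u P} + 1 := by
        simp only [dot2_sub, sub_neg]
        gcongr
        exact erase_subset P S

end HalvingLines

section Rank

variable {α : Type*} {S : Finset α} {f : α → ℝ}

lemma card_filter_lt_lt_of_lt {P Q : α} (hP : P ∈ S) (h : f P < f Q) :
    #{X ∈ S | f X < f P} < #{X ∈ S | f X < f Q} := by
  refine card_lt_card ((ssubset_iff_of_subset fun X hX => ?_).2 ⟨P, ?_, fun hP' => ?_⟩)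
  · exact mem_filter.2 ⟨(mem_filter.1 hX).1, (mem_filter.1 hX).2.trans h⟩
  · exact mem_filter.2 ⟨hP, h⟩
  · exact lt_irrefl _ (mem_filter.1 hP').2

lemma injOn_card_filter_lt (hf : Set.InjOn f S) :
    Set.InjOn (fun P => #{X ∈ S | f X < f P}) S := by
  intro P hP Q hQ h
  by_contra hPQ
  rcases (hf.ne hP hQ hPQ).lt_or_gt with hlt | hlt
  · exact (card_filter_lt_lt_of_lt hP hlt).ne h
  · exact (card_filter_lt_lt_of_lt hQ hlt).ne' h

lemma card_filter_lt_add_card_filter_gt [DecidableEq α] (hf : Set.InjOn f S) {P : α}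
    (hP : P ∈ S) : #{X ∈ S | f X < f P} + #{X ∈ S | f P < f X} + 1 = #S := by
  have hsplit : {X ∈ S | f X < f P ∨ f P < f X} = S.erase P := by
    ext X
    rw [mem_filter, mem_erase, ← ne_iff_lt_or_gt, and_comm]
    exact and_congr_left fun hX => hf.ne_iff hX hP
  rw [← card_union_of_disjoint (disjoint_filter.2 fun _ _ => lt_asymm), ← filter_or, hsplit,
    card_erase_add_one hP]

end Rank

theorem stmt_14_general (S : Finset (ℝ × ℝ))
    (hgp : GenPos S) :
    ∀ k : ℕ, 1 ≤ k →
      {P : ℝ × ℝ | P ∈ S ∧ (S.card : ℤ) - 2 * k + 1 ≤ (hdeg S P : ℤ)}.ncard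
        ≤ 2 * k := by
  intro k _
  obtain ⟨u, hu, hinj⟩ := exists_injOn_dot2 S
  have hinj_neg : Set.InjOn (dot2 (-u)) S :=
    fun P hP Q hQ h => hinj hP hQ (by simpa only [dot2_neg_left, neg_inj] using h)
  let rank : ℝ × ℝ → ℤ := fun P => #{X ∈ S | dot2 u X < dot2 u P}
  have hrank : ∀ P ∈ {P : ℝ × ℝ | P ∈ S ∧ (S.card : ℤ) - 2 * k + 1 ≤ (hdeg S P : ℤ)},
      rank P ∈ (Icc ((#S - 2 * k + 1) / 2) ((#S + 2 * k - 2) / 2) : Finset ℤ) := by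
    rintro P ⟨hP, hlarge⟩
    have below := hdeg_le_two_mul_card_filter_lt_add_one hgp hu hinj hP
    have above := hdeg_le_two_mul_card_filter_lt_add_one hgp (neg_ne_zero.2 hu) hinj_neg hP
    simp only [dot2_neg_left, neg_lt_neg_iff] at above
    have total := card_filter_lt_add_card_filter_gt hinj hP
    -- so `rank P` and the `n - 1 - rank P` points above `P` both number at least `(n - 2k) / 2`
    rw [mem_Icc]
    simp only [rank]
    omega
  calc _ ≤ (↑(Icc ((#S - 2 * k + 1) / 2) ((#S + 2 * k - 2) / 2) : Finset ℤ) : Set ℤ).ncard :=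
        Set.ncard_le_ncard_of_injOn rank hrank
          ((Nat.cast_injective.comp_injOn (injOn_card_filter_lt hinj)).mono fun _ h => h.1)
    _ ≤ 2 * k := by
        rw [Set.ncard_coe_finset, Int.card_Icc]
        omega

/-- for every positive integer `k`, at most `2k` points of `S`
have degree at least `n - 2k + 1` in the underlying graph. -/
theorem stmt_14 (S : Finset (ℝ × ℝ)) (heven : Even S.card) (h4 : 4 ≤ S.card)
    (hgp : GenPos S) :
    ∀ k : ℕ, 1 ≤ k →
      {P : ℝ × ℝ | P ∈ S ∧ (S.card : ℤ) - 2 * k + 1 ≤ (hdeg S P : ℤ)}.ncard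
        ≤ 2 * k :=
  stmt_14_general S hgp
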